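/- For every covariant event E ∈ R, there exists an event E′ in the σ-algebra generated by the doubly principal stem-sets such that the symmetric difference E △ E′ is contained in P_∞^c. -/

import Mathlib

open MeasurableSpace MeasureTheory Set

/-- An (infinite) causal set: an irreflexive, transitive relation on ℕ
satisfying the natural-labeling condition `x ≺ y → x < y`.  The type of all
such causets plays the role of Ω. -/
structure Causet where
  rel : ℕ → ℕ → Prop
  irrefl : ∀ x, ¬ rel x x
  trans : ∀ x y z, rel x y → rel y z → rel x z
  lt_of_rel : ∀ x y, rel x y → x < y

/-- A finite causet on ground-set `{0, …, n-1}` with natural labeling. -/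
structure FinCauset (n : ℕ) where
  rel : ℕ → ℕ → Prop
  bounded : ∀ x y, rel x y → x < n ∧ y < n
  irrefl : ∀ x, ¬ rel x x
  trans : ∀ x y z, rel x y → rel y z → rel x z
  lt_of_rel : ∀ x y, rel x y → x < y

/-- The cylinder set of a finite causet `C` on `{0,…,n-1}`: all causets whose
restriction to `{0,…,n-1}` equals `C`. -/
def cyl {n : ℕ} (C : FinCauset n) : Set Causet :=
  { D | ∀ x y, x < n → y < n → (D.rel x y ↔ C.rel x y) }

/-- The σ-algebra 𝔐 generated by all cylinder sets. -/
def cylAlgebra : MeasurableSpace Causet :=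
  .generateFrom { E | ∃ n, 0 < n ∧ ∃ C : FinCauset n, E = cyl C }

/-- Order isomorphism between two (infinite) causets. -/
def Iso (C D : Causet) : Prop :=
  ∃ f : ℕ ≃ ℕ, ∀ x y, C.rel x y ↔ D.rel (f x) (f y)

/-- A set of causets is covariant if it is closed under order isomorphism. -/
def CovariantEvent (E : Set Causet) : Prop :=
  ∀ C D : Causet, Iso C D → C ∈ E → D ∈ E

/-- Membership in the σ-algebra R of covariant events: measurable w.r.t. 𝔐
and closed under order isomorphism. -/
def MemR (E : Set Causet) : Prop :=
  MeasurableSet[cylAlgebra] E ∧ CovariantEvent E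

/-- A stem of a causet: a finite down-set. -/
def IsStem (D : Causet) (A : Set ℕ) : Prop :=
  A.Finite ∧ ∀ x y, y ∈ A → D.rel x y → x ∈ A

/-- The stem-set of (the order of) the finite causet `C`: all causets
containing a stem order-isomorphic to `C`. -/
def stemSet {n : ℕ} (C : FinCauset n) : Set Causet :=
  { D | ∃ A : Set ℕ, IsStem D A ∧
      ∃ f : {x : ℕ // x < n} ≃ A,
        ∀ x y : {x : ℕ // x < n}, C.rel x.1 y.1 ↔ D.rel (f x).1 (f y).1 }

/-- The collection S of all stem-sets. -/
def stemSets : Set (Set Causet) :=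
  { E | ∃ n, 0 < n ∧ ∃ C : FinCauset n, E = stemSet C }

/-- The σ-algebra R(S) generated by the stem-sets. -/
def stemAlgebra : MeasurableSpace Causet := .generateFrom stemSets

/-- A rogue: a causet `U` for which there is a non-isomorphic causet `V`
belonging to exactly the same stem-sets. -/
def IsRogue (U : Causet) : Prop :=
  ∃ V : Causet, ¬ Iso U V ∧
    ∀ (n : ℕ) (C : FinCauset n), 0 < n → (V ∈ stemSet C ↔ U ∈ stemSet C)

/-- Θ: the set of rogues. -/
def Theta : Set Causet := { U | IsRogue U }

/-- `A` is the past of a break of `D`: `(A, Aᶜ)` is a partition into nonempty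
parts with every element of `A` below every element of `Aᶜ`. -/
def IsBreakPast (D : Causet) (A : Set ℕ) : Prop :=
  A.Nonempty ∧ Aᶜ.Nonempty ∧ ∀ a ∈ A, ∀ b ∈ Aᶜ, D.rel a b

/-- B_∞: the set of causets with infinitely many breaks. -/
def Binf : Set Causet := { D | { A : Set ℕ | IsBreakPast D A }.Infinite }

/-- `x` is a maximal element of the restriction of the finite causet `C`
to the elements `< k`. -/
def FMaximalBelow {n : ℕ} (C : FinCauset n) (k x : ℕ) : Prop :=
  x < k ∧ ∀ y, y < k → ¬ C.rel x y

/-- A principal finite causet: it has a unique maximal element. -/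
def Principal {n : ℕ} (C : FinCauset n) : Prop :=
  ∃! x, FMaximalBelow C n x

/-- 𝔐_b: the σ-algebra generated by the principal cylinder sets. -/
def principalCylAlgebra : MeasurableSpace Causet :=
  .generateFrom { E | ∃ n, ∃ C : FinCauset n, Principal C ∧ E = cyl C }

/-- Membership in R_b: covariant events containing all or none of the
causets with finitely many breaks. -/
def MemRb (E : Set Causet) : Prop :=
  MemR E ∧ (Binfᶜ ⊆ E ∨ Binfᶜ ⊆ Eᶜ)

/-- `x` is a maximal element of the restriction of the causet `D` to `{0,…,n}`. -/
def RMaximal (D : Causet) (n x : ℕ) : Prop :=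
  x ≤ n ∧ ∀ y, y ≤ n → ¬ D.rel x y

/-- 𝔉: causets all but finitely many of whose initial-segment restrictions
have at least two maximal elements. -/
def Ffin : Set Causet :=
  { D | ∃ m : ℕ, ∀ n, m < n →
      ∃ x y, x ≠ y ∧ RMaximal D n x ∧ RMaximal D n y }

/-- The restriction of the m-causet `D` to `{0,…,n-1}` equals the n-causet `C`. -/
def RestrEq {m n : ℕ} (D : FinCauset m) (C : FinCauset n) : Prop :=
  ∀ x y, x < n → y < n → (D.rel x y ↔ C.rel x y)

/-- Γ_{C}: the causets containing `C` as a stem but containing no principal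
causet of larger cardinality as a stem (i.e. `cyl C` minus the cylinder sets
of the principal causets extending `C`). -/
def Gamma {n : ℕ} (C : FinCauset n) : Set Causet :=
  cyl C \ { X | ∃ m, n < m ∧ ∃ D : FinCauset m, Principal D ∧ RestrEq D C ∧ X ∈ cyl D }

/-- Ŝ: the collection of principal stem-sets. -/
def principalStemSets : Set (Set Causet) :=
  { E | ∃ n, ∃ C : FinCauset n, Principal C ∧ E = stemSet C }

/-- R(Ŝ): the σ-algebra generated by the principal stem-sets. -/
def principalStemAlgebra : MeasurableSpace Causet := .generateFrom principalStemSets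

/-- `x` is a post of `D`: every other element is related to `x`. -/
def IsPost (D : Causet) (x : ℕ) : Prop :=
  ∀ y, y ≠ x → D.rel y x ∨ D.rel x y

/-- P_∞: the set of causets with infinitely many posts. -/
def Pinf : Set Causet := { D | { x | IsPost D x }.Infinite }

/-- A doubly principal finite causet: both it and its restriction to
`{0,…,n-2}` have a unique maximal element. -/
def DoublyPrincipal {n : ℕ} (C : FinCauset n) : Prop :=
  Principal C ∧ ∃! x, FMaximalBelow C (n - 1) x

/-- 𝔐_p: the σ-algebra generated by the doubly principal cylinder sets. -/
def doublyPrincipalCylAlgebra : MeasurableSpace Causet :=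
  .generateFrom { E | ∃ n, ∃ C : FinCauset n, DoublyPrincipal C ∧ E = cyl C }

/-- The σ-algebra generated by the doubly principal stem-sets. -/
def doublyPrincipalStemAlgebra : MeasurableSpace Causet :=
  .generateFrom { E | ∃ n, ∃ C : FinCauset n, DoublyPrincipal C ∧ E = stemSet C }

/-!
If `p` is a post of `D`, then `[0, p]` lies below everything else and the prefix `[0, p + 1]` is
doubly principal. Testing a causet with infinitely many posts against the doubly principal
stem-sets therefore detects whether its first `n` elements lie below all others and which order
they carry (`phiSet`). Hence the cuts of `D` and the isomorphism types of the finite blocks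
between consecutive cuts are measurable in the doubly principal stem-sets; gluing chosen
representatives of these blocks gives a causet `canon D` that depends measurably on `D` and is
isomorphic to `D` whenever `D ∈ P_∞`. For covariant `E`, the event `E' = canon ⁻¹' E` then
differs from `E` only outside `P_∞`.
-/

open scoped Classical

noncomputable section

section IsoOn

variable {α β γ : Type*} {r : α → α → Prop} {r' : β → β → Prop} {r'' : γ → γ → Prop}
  {g : α → β} {s : Set α} {t : Set β}

def IsoOn (r : α → α → Prop) (r' : β → β → Prop) (g : α → β) (s : Set α) (t : Set β) : Prop :=
  BijOn g s t ∧ ∀ x ∈ s, ∀ y ∈ s, (r x y ↔ r' (g x) (g y))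

lemma IsoOn.comp {g' : β → γ} {u : Set γ} (h' : IsoOn r' r'' g' t u) (h : IsoOn r r' g s t) :
    IsoOn r r'' (g' ∘ g) s u :=
  ⟨h'.1.comp h.1, fun x hx y hy =>
    (h.2 x hx y hy).trans (h'.2 _ (h.1.mapsTo hx) _ (h.1.mapsTo hy))⟩

lemma IsoOn.symm [Nonempty α] (h : IsoOn r r' g s t) : IsoOn r' r (Function.invFunOn g s) t s := by
  have hinv := h.1.invOn_invFunOn
  refine ⟨h.1.symm hinv.symm, fun x hx y hy => ?_⟩
  have hmaps := (h.1.symm hinv.symm).mapsTo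
  rw [h.2 _ (hmaps hx) _ (hmaps hy), hinv.2 hx, hinv.2 hy]

lemma IsoOn.mono {s' : Set α} {t' : Set β} (h : IsoOn r r' g s t) (hs : s' ⊆ s)
    (hg : BijOn g s' t') : IsoOn r r' g s' t' :=
  ⟨hg, fun x hx y hy => h.2 x (hs hx) y (hs hy)⟩

lemma IsoOn.congr {r₁ : α → α → Prop} {r₁' : β → β → Prop} (h : IsoOn r r' g s t)
    (hr : ∀ x ∈ s, ∀ y ∈ s, (r x y ↔ r₁ x y)) (hr' : ∀ x ∈ t, ∀ y ∈ t, (r' x y ↔ r₁' x y)) :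
    IsoOn r₁ r₁' g s t :=
  ⟨h.1, fun x hx y hy => by
    rw [← hr x hx y hy, ← hr' _ (h.1.mapsTo hx) _ (h.1.mapsTo hy)]; exact h.2 x hx y hy⟩

end IsoOn

lemma bijOn_add_const_Iio (a b : ℕ) : BijOn (· + a) (Iio (b - a)) (Ico a b) := by
  refine ⟨fun x hx => ?_, fun x _ y _ h => Nat.add_right_cancel h, fun y hy => ?_⟩
  · simp only [mem_Iio, mem_Ico] at hx ⊢; omega
  · simp only [mem_Ico] at hy
    exact ⟨y - a, by simp only [mem_Iio]; omega, by simp only; omega⟩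

lemma bijOn_ite_Iio {g : ℕ → ℕ} {m n : ℕ} (hg : BijOn g (Iio m) (Iio m)) (hmn : m ≤ n) :
    BijOn (fun x => if x < m then g x else x) (Iio n) (Iio n) := by
  have hlt : ∀ x < m, g x < m := fun x hx => hg.mapsTo hx
  refine ⟨fun x hx => ?_, fun x hx y hy hxy => ?_, fun y hy => ?_⟩
  · simp only [mem_Iio] at hx ⊢
    split_ifs with h
    · exact lt_of_lt_of_le (hlt x h) hmn
    · exact hx
  · simp only at hxy
    split_ifs at hxy with h₁ h₂ h₂
    · exact hg.injOn h₁ h₂ hxy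
    · exact absurd (hxy ▸ hlt x h₁) h₂
    · exact absurd (hxy ▸ hlt y h₂) h₁
    · exact hxy
  · by_cases h : y < m
    · obtain ⟨x, hx, rfl⟩ := hg.surjOn h
      exact ⟨x, lt_of_lt_of_le hx hmn, if_pos hx⟩
    · exact ⟨y, hy, if_neg h⟩

lemma Set.BijOn.ncard_eq_of_Iio {g : ℕ → ℕ} {n : ℕ} {A : Set ℕ} (h : BijOn g (Iio n) A) :
    A.ncard = n := by
  rw [← h.image_eq, h.injOn.ncard_image, ncard_Iio_nat]

lemma Set.Finite.bijOn_nth {A : Set ℕ} (hA : A.Finite) :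
    BijOn (Nat.nth (· ∈ A)) (Iio A.ncard) A ∧ StrictMonoOn (Nat.nth (· ∈ A)) (Iio A.ncard) := by
  rw [ncard_eq_toFinset_card A hA]
  have hbij := (Nat.nth_injOn hA).bijOn_image
  rw [Nat.image_nth_Iio_card hA] at hbij
  exact ⟨hbij, Nat.nth_strictMonoOn hA⟩

lemma Nat.nth_eq_self_of_Iio_subset {A : Set ℕ} {m i : ℕ} (hA : Iio m ⊆ A) (hi : i < m) :
    Nat.nth (· ∈ A) i = i := by
  have hcount : Nat.count (· ∈ A) i = i := by
    rw [Nat.count_eq_card_filter_range, Finset.filter_true_of_mem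
      fun x hx => hA ((Finset.mem_range.1 hx).trans hi), Finset.card_range]
  conv_lhs => rw [← hcount]
  exact Nat.nth_count (hA hi)

lemma measurable_sInf_setOf {α : Type*} {m : MeasurableSpace α} {P : α → ℕ → Prop}
    (hP : ∀ n, MeasurableSet[m] {x | P x n}) : Measurable[m] fun x => sInf {n | P x n} := by
  refine measurable_to_countable' fun k => ?_
  have : (fun x => sInf {n | P x n}) ⁻¹' {k} =
      ({x | P x k} ∩ ⋂ j < k, {x | P x j}ᶜ) ∪ ({_x | k = 0} ∩ ⋂ j, {x | P x j}ᶜ) := by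
    ext x
    simp only [mem_preimage, mem_singleton_iff, mem_union, mem_inter_iff, mem_iInter,
      mem_compl_iff, mem_ofPred_eq]
    constructor
    · rintro rfl
      by_cases hne : {n | P x n}.Nonempty
      · exact Or.inl ⟨Nat.sInf_mem hne, fun j hj => Nat.notMem_of_lt_sInf hj⟩
      · rw [not_nonempty_iff_eq_empty.1 hne, Nat.sInf_empty]
        exact Or.inr ⟨rfl, fun j hj => hne ⟨j, hj⟩⟩
    · rintro (⟨hm, hlt⟩ | ⟨rfl, hnone⟩)
      · exact le_antisymm (Nat.sInf_le hm) (not_lt.1 fun h => hlt _ h (Nat.sInf_mem ⟨k, hm⟩))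
      · rw [show {n | P x n} = ∅ from eq_empty_of_forall_notMem hnone, Nat.sInf_empty]
  rw [this]
  exact ((hP k).inter (.iInter fun j => .iInter fun _ => (hP j).compl)).union
    ((MeasurableSet.const _).inter (.iInter fun j => (hP j).compl))

section Blocks

variable {cut : ℕ → ℕ}

/-- For strictly monotone `cut` with `cut 0 = 0`, the `k` with `x ∈ [cut k, cut (k + 1))`; the
search may stop at `x` because `k ≤ cut k`. -/
def blockIdx (cut : ℕ → ℕ) (x : ℕ) : ℕ := Nat.findGreatest (fun k => cut k ≤ x) x

lemma mem_Ico_blockIdx (hcut : StrictMono cut) (h0 : cut 0 = 0) (x : ℕ) :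
    x ∈ Ico (cut (blockIdx cut x)) (cut (blockIdx cut x + 1)) := by
  refine ⟨Nat.findGreatest_spec (P := fun k => cut k ≤ x) (Nat.zero_le x) (by simp [h0]),
    not_le.1 fun h => ?_⟩
  exact Nat.findGreatest_is_greatest (Nat.lt_succ_self _) ((hcut.id_le _).trans h) h

lemma blockIdx_eq (hcut : StrictMono cut) (h0 : cut 0 = 0) {x k : ℕ}
    (hx : x ∈ Ico (cut k) (cut (k + 1))) : blockIdx cut x = k := by
  obtain ⟨h₁, h₂⟩ := mem_Ico_blockIdx hcut h0 x
  rcases lt_trichotomy (blockIdx cut x) k with h | h | h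
  · exact absurd (lt_of_lt_of_le h₂ (hcut.monotone h)) (not_lt.2 hx.1)
  · exact h
  · exact absurd (lt_of_lt_of_le hx.2 (hcut.monotone h)) (not_lt.2 h₁)

lemma blockIdx_le (x : ℕ) : blockIdx cut x ≤ x := Nat.findGreatest_le x

end Blocks

/-- Finite relations on `[0, size)` as finite data, so that there are only countably many. -/
structure Code where
  size : ℕ
  pairs : Finset (ℕ × ℕ)

namespace Code

instance : Inhabited Code := ⟨⟨1, ∅⟩⟩

instance : Countable Code :=
  Function.Injective.countable (f := fun c : Code => (c.size, c.pairs))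
    (by rintro ⟨⟩ ⟨⟩ h; cases h; rfl)

def rel (c : Code) (x y : ℕ) : Prop := (x, y) ∈ c.pairs

def IsValid (c : Code) : Prop :=
  (∀ p ∈ c.pairs, p.1 < p.2 ∧ p.2 < c.size) ∧ ∀ x y z, c.rel x y → c.rel y z → c.rel x z

lemma IsValid.lt {c : Code} (h : c.IsValid) {x y : ℕ} (hxy : c.rel x y) : x < y :=
  (h.1 _ hxy).1

lemma IsValid.lt_size {c : Code} (h : c.IsValid) {x y : ℕ} (hxy : c.rel x y) : y < c.size :=
  (h.1 _ hxy).2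

def toFinCauset (c : Code) (h : c.IsValid) : FinCauset c.size where
  rel := c.rel
  bounded _ _ hxy := ⟨(h.lt hxy).trans (h.lt_size hxy), h.lt_size hxy⟩
  irrefl x hx := lt_irrefl x (h.lt hx)
  trans := h.2
  lt_of_rel _ _ := h.lt

def ofRel (n : ℕ) (r : ℕ → ℕ → Prop) : Code :=
  ⟨n, {p ∈ Finset.range n ×ˢ Finset.range n | r p.1 p.2}⟩

@[simp] lemma size_ofRel (n : ℕ) (r : ℕ → ℕ → Prop) : (ofRel n r).size = n := rfl

@[simp] lemma rel_ofRel {n : ℕ} {r : ℕ → ℕ → Prop} {x y : ℕ} :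
    (ofRel n r).rel x y ↔ x < n ∧ y < n ∧ r x y := by
  simp [rel, ofRel, and_assoc]

lemma isValid_ofRel {n : ℕ} {r : ℕ → ℕ → Prop} (hlt : ∀ x < n, ∀ y < n, r x y → x < y)
    (htrans : ∀ x y z, r x y → r y z → r x z) : (ofRel n r).IsValid := by
  refine ⟨fun ⟨x, y⟩ hp => ?_, fun x y z hxy hyz => ?_⟩
  · obtain ⟨hx, hy, h⟩ := rel_ofRel.1 hp
    exact ⟨hlt x hx y hy h, hy⟩
  · obtain ⟨hx, -, h⟩ := rel_ofRel.1 hxy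
    obtain ⟨-, hz, h'⟩ := rel_ofRel.1 hyz
    exact rel_ofRel.2 ⟨hx, hz, htrans _ _ _ h h'⟩

lemma isoOn_ofRel {n : ℕ} {r : ℕ → ℕ → Prop} {e : ℕ → ℕ} {A : Set ℕ} (he : BijOn e (Iio n) A) :
    IsoOn (ofRel n fun x y => r (e x) (e y)).rel r e (Iio n) A :=
  ⟨he, fun x hx y hy => by simp [mem_Iio.1 hx, mem_Iio.1 hy]⟩

def shift (c : Code) (m : ℕ) : Code := ofRel (c.size - m) fun x y => c.rel (x + m) (y + m)

def Iso (c d : Code) : Prop := ∃ g, IsoOn c.rel d.rel g (Iio c.size) (Iio d.size)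

lemma Iso.symm {c d : Code} (h : c.Iso d) : d.Iso c :=
  let ⟨_, hg⟩ := h; ⟨_, hg.symm⟩

lemma Iso.trans {c d e : Code} (h : c.Iso d) (h' : d.Iso e) : c.Iso e :=
  let ⟨_, hg⟩ := h; let ⟨_, hg'⟩ := h'; ⟨_, hg'.comp hg⟩

lemma Iso.size_eq {c d : Code} (h : c.Iso d) : c.size = d.size := by
  obtain ⟨g, hg, -⟩ := h
  rw [← ncard_Iio_nat c.size, ← ncard_Iio_nat d.size, ← hg.image_eq,
    hg.injOn.ncard_image]

end Code

lemma Code.isoOn_shift (c : Code) (m : ℕ) :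
    IsoOn (c.shift m).rel c.rel (· + m) (Iio (c.size - m)) (Ico m c.size) :=
  Code.isoOn_ofRel (bijOn_add_const_Iio m c.size)

namespace Causet

variable (D : Causet)

def prefixCode (n : ℕ) : Code := Code.ofRel n D.rel

def blockCode (a b : ℕ) : Code := Code.ofRel (b - a) fun x y => D.rel (x + a) (y + a)

lemma isValid_prefixCode (n : ℕ) : (D.prefixCode n).IsValid :=
  Code.isValid_ofRel (fun _ _ _ _ => D.lt_of_rel _ _) D.trans

lemma isoOn_prefixCode (n : ℕ) : IsoOn (D.prefixCode n).rel D.rel id (Iio n) (Iio n) :=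
  Code.isoOn_ofRel (bijOn_id _)

lemma isoOn_blockCode (a b : ℕ) :
    IsoOn (D.blockCode a b).rel D.rel (· + a) (Iio (b - a)) (Ico a b) :=
  Code.isoOn_ofRel (bijOn_add_const_Iio a b)

end Causet

lemma mem_stemSet_iff {n : ℕ} {C : FinCauset n} {D : Causet} :
    D ∈ stemSet C ↔ ∃ A, IsStem D A ∧ ∃ g, IsoOn C.rel D.rel g (Iio n) A := by
  constructor
  · rintro ⟨A, hA, f, hf⟩
    let g x := if h : x < n then (f ⟨x, h⟩ : ℕ) else 0
    have hg : ∀ x (h : x < n), g x = f ⟨x, h⟩ := fun x h => dif_pos h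
    refine ⟨A, hA, g, ⟨fun x hx => ?_, fun x hx y hy hxy => ?_, fun y hy => ?_⟩,
      fun x hx y hy => ?_⟩
    · rw [hg x hx]; exact (f _).2
    · rw [hg x hx, hg y hy] at hxy
      exact congrArg Subtype.val (f.injective (Subtype.ext hxy))
    · refine ⟨f.symm ⟨y, hy⟩, (f.symm ⟨y, hy⟩).2, ?_⟩
      rw [hg _ (f.symm ⟨y, hy⟩).2]; simp
    · rw [hg x hx, hg y hy]; exact hf ⟨x, hx⟩ ⟨y, hy⟩
  · rintro ⟨A, hA, g, hg, hrel⟩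
    exact ⟨A, hA, hg.equiv g, fun x y => hrel x x.2 y y.2⟩

lemma IsPost.rel_of_lt {D : Causet} {p x : ℕ} (hp : IsPost D p) (h : x < p) : D.rel x p :=
  (hp x h.ne).resolve_right fun h' => (D.lt_of_rel _ _ h').not_gt h

lemma IsPost.rel_of_gt {D : Causet} {p y : ℕ} (hp : IsPost D p) (h : p < y) : D.rel p y :=
  (hp y h.ne').resolve_left fun h' => (D.lt_of_rel _ _ h').not_gt h

lemma exists_isPost_ge {D : Causet} (hD : D ∈ Pinf) (n : ℕ) : ∃ p, n ≤ p ∧ IsPost D p :=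
  let ⟨p, hp, hnp⟩ := Set.Infinite.exists_gt hD n; ⟨p, hnp.le, hp⟩

namespace Causet

variable (D : Causet)

def IsCut (m : ℕ) : Prop := ∀ x y, x < m → m ≤ y → D.rel x y

lemma isCut_zero : D.IsCut 0 := fun _ _ h => absurd h (Nat.not_lt_zero _)

variable {D}

lemma _root_.IsPost.isCut_succ {p : ℕ} (hp : IsPost D p) : D.IsCut (p + 1) := by
  intro x y hx hy
  rcases (Nat.lt_succ_iff.1 hx).lt_or_eq with h | rfl
  · exact D.trans _ _ _ (hp.rel_of_lt h) (hp.rel_of_gt hy)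
  · exact hp.rel_of_gt hy

lemma isStem_Iio (D : Causet) (n : ℕ) : IsStem D (Iio n) :=
  ⟨finite_Iio n, fun _ _ hy hxy => (D.lt_of_rel _ _ hxy).trans hy⟩

lemma mem_stemSet_prefixCode (D : Causet) (n : ℕ) :
    D ∈ stemSet ((D.prefixCode n).toFinCauset (D.isValid_prefixCode n)) :=
  mem_stemSet_iff.2 ⟨_, D.isStem_Iio n, id, D.isoOn_prefixCode n⟩

lemma existsUnique_fMaximalBelow_prefixCode {n k : ℕ} (hk : k < n) (h : ∀ x < k, D.rel x k) :
    ∃! x, FMaximalBelow ((D.prefixCode n).toFinCauset (D.isValid_prefixCode n)) (k + 1) x := by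
  refine ⟨k, ⟨lt_add_one k, fun y hy hky => ?_⟩, fun x ⟨hx, hmax⟩ => ?_⟩
  · have := D.lt_of_rel _ _ (Code.rel_ofRel.1 hky).2.2
    omega
  · by_contra hne
    exact hmax k (lt_add_one k) (Code.rel_ofRel.2 ⟨by omega, hk, h x (by omega)⟩)

lemma _root_.IsPost.doublyPrincipal_prefixCode {p : ℕ} (hp : IsPost D p) :
    DoublyPrincipal ((D.prefixCode (p + 2)).toFinCauset (D.isValid_prefixCode _)) :=
  ⟨existsUnique_fMaximalBelow_prefixCode (by omega) fun x hx => hp.isCut_succ x _ hx le_rfl,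
    existsUnique_fMaximalBelow_prefixCode (by omega) fun x hx => hp.rel_of_lt hx⟩

lemma prefixCode_rel_iff {n x y : ℕ} (hx : x < n) (hy : y < n) :
    (D.prefixCode n).rel x y ↔ D.rel x y := by
  simp [prefixCode, hx, hy]

section Dominating

variable {r : ℕ → ℕ → Prop} {g : ℕ → ℕ} {m n : ℕ}

/-- The image dominates the rest of `[0, n)`, so by the natural labelling of `D` it is an initial
segment. -/
lemma image_Iio_eq_of_isoOn (hg : IsoOn r D.rel g (Iio n) (Iio n)) (hmn : m ≤ n)
    (hdom : ∀ x < m, ∀ y, m ≤ y → y < n → r x y) : g '' Iio m = Iio m := by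
  have hcard : (g '' Iio m).ncard = m := by
    rw [(hg.1.injOn.mono (Iio_subset_Iio hmn)).ncard_image, ncard_Iio_nat]
  have hsub : Iio m ⊆ g '' Iio m := by
    intro x hx
    by_contra hxB
    obtain ⟨y, hy, rfl⟩ := hg.1.surjOn (show x ∈ Iio n from lt_of_lt_of_le hx hmn)
    have hym : m ≤ y := not_lt.1 fun h => hxB ⟨y, h, rfl⟩
    have hbelow : g '' Iio m ⊆ Iio (g y) := by
      rintro _ ⟨z, hz, rfl⟩
      exact D.lt_of_rel _ _
        ((hg.2 z (lt_of_lt_of_le hz hmn) y hy).1 (hdom z hz y hym hy))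
    have := ncard_le_ncard hbelow (finite_Iio _)
    rw [hcard, ncard_Iio_nat] at this
    exact absurd hx (not_lt.2 this)
  exact (eq_of_subset_of_ncard_le hsub (by rw [hcard, ncard_Iio_nat])
    ((finite_Iio m).image g)).symm

lemma bijOn_of_isoOn_dominating (hg : IsoOn r D.rel g (Iio n) (Iio n)) (hmn : m ≤ n)
    (hdom : ∀ x < m, ∀ y, m ≤ y → y < n → r x y) :
    BijOn g (Iio m) (Iio m) ∧ BijOn g (Ico m n) (Ico m n) := by
  have himage := image_Iio_eq_of_isoOn hg hmn hdom
  have hdiff : Iio n \ Iio m = Ico m n := by ext; simp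
  have hlow := hg.1.subset_left (Iio_subset_Iio hmn)
  have hhigh := hg.1.subset_left (sdiff_subset (t := Iio m))
  rw [himage] at hlow
  rw [hg.1.injOn.image_sdiff, hg.1.image_eq, inter_eq_right.2 (Iio_subset_Iio hmn), himage,
    hdiff] at hhigh
  exact ⟨hlow, hhigh⟩

lemma rel_of_isoOn_dominating (hg : IsoOn r D.rel g (Iio n) (Iio n)) (hmn : m ≤ n)
    (hdom : ∀ x < m, ∀ y, m ≤ y → y < n → r x y) {x y : ℕ} (hx : x < m) (hy : m ≤ y)
    (hyn : y < n) : D.rel x y := by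
  obtain ⟨hlow, hhigh⟩ := bijOn_of_isoOn_dominating hg hmn hdom
  obtain ⟨x', hx', rfl⟩ := hlow.surjOn (mem_Iio.2 hx)
  obtain ⟨y', ⟨hy'm, hy'n⟩, rfl⟩ := hhigh.surjOn (mem_Ico.2 ⟨hy, hyn⟩)
  exact (hg.2 x' (lt_of_lt_of_le hx' hmn) y' hy'n).1 (hdom x' hx' y' hy'm hy'n)

end Dominating

end Causet

/-- `s` is isomorphic to a down-set of `t` lying below all other elements of `t`; the witness
`u` is a relabelling of `t` in which that down-set is literally `s`. -/
def IsInitialSummand (s t : Code) : Prop :=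
  ∃ u : Code, u.IsValid ∧ u.Iso t ∧
    (∀ x < s.size, ∀ y < s.size, (u.rel x y ↔ s.rel x y)) ∧
    ∀ x < s.size, ∀ y, s.size ≤ y → y < u.size → u.rel x y

lemma IsInitialSummand.of_iso {s t t' : Code} (h : IsInitialSummand s t) (ht : t.Iso t') :
    IsInitialSummand s t' :=
  let ⟨u, hu, hut, hs, hdom⟩ := h; ⟨u, hu, hut.trans ht, hs, hdom⟩

/-- For causets with infinitely many posts, `phiSet s` consists of those whose first `s.size`
elements lie below all others and are ordered like `s` (`isCut_and_iso_of_mem_phiSet`); it is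
built from doubly principal stem-sets only. -/
def phiSet (s : Code) : Set Causet :=
  ⋂ (t : Code) (ht : t.IsValid) (_ : DoublyPrincipal (t.toFinCauset ht))
    (_ : s.size ≤ t.size ∧ ¬ IsInitialSummand s t), (stemSet (t.toFinCauset ht))ᶜ

lemma mem_phiSet {s : Code} {D : Causet} :
    D ∈ phiSet s ↔ ∀ t ht, DoublyPrincipal (t.toFinCauset ht) → s.size ≤ t.size →
      D ∈ stemSet (t.toFinCauset ht) → IsInitialSummand s t := by
  simp only [phiSet, mem_iInter, mem_compl_iff, and_imp, not_imp_not]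

lemma measurableSet_stemSet_of_doublyPrincipal {n : ℕ} {C : FinCauset n}
    (h : DoublyPrincipal C) : MeasurableSet[doublyPrincipalStemAlgebra] (stemSet C) :=
  measurableSet_generateFrom ⟨n, C, h, rfl⟩

lemma measurableSet_phiSet (s : Code) : MeasurableSet[doublyPrincipalStemAlgebra] (phiSet s) :=
  .iInter fun _ => .iInter fun _ => .iInter fun hdp => .iInter fun _ =>
    (measurableSet_stemSet_of_doublyPrincipal hdp).compl

lemma Causet.IsCut.mem_phiSet_prefixCode {D : Causet} {m : ℕ} (hm : D.IsCut m) :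
    D ∈ phiSet (D.prefixCode m) := by
  refine mem_phiSet.2 fun t _ _ (hmt : m ≤ t.size) hD => ?_
  obtain ⟨A, hA, g, hg⟩ := mem_stemSet_iff.1 hD
  have hcard : A.ncard = t.size := hg.1.ncard_eq_of_Iio
  -- a missing `x < m` would keep every element `≥ m` out of the down-set `A`
  have hsub : Iio m ⊆ A := by
    intro x hx
    by_contra hxA
    rw [mem_Iio] at hx
    have hA' : A ⊆ Iio m \ {x} := fun a ha =>
      ⟨not_le.1 fun h => hxA (hA.2 x a ha (hm x a hx h)), fun h => hxA (h ▸ ha)⟩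
    have := ncard_le_ncard hA' (finite_Iio m).sdiff
    rw [ncard_sdiff_singleton_of_mem (mem_Iio.2 hx), ncard_Iio_nat, hcard] at this
    omega
  obtain ⟨he, hmono⟩ := hA.1.bijOn_nth
  rw [hcard] at he hmono
  set e := Nat.nth (· ∈ A)
  have heid : ∀ i < m, e i = i := fun i hi => Nat.nth_eq_self_of_Iio_subset hsub hi
  refine ⟨Code.ofRel t.size fun x y => D.rel (e x) (e y),
    Code.isValid_ofRel (fun x hx y hy h => (hmono.lt_iff_lt hx hy).1 (D.lt_of_rel _ _ h))
      fun _ _ _ => D.trans _ _ _,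
    ⟨_, hg.symm.comp (Code.isoOn_ofRel he)⟩, fun x (hx : x < m) y (hy : y < m) => ?_,
    fun x (hx : x < m) y (hy : m ≤ y) hyt => ?_⟩
  · have hxt : x < t.size := lt_of_lt_of_le hx hmt
    have hyt : y < t.size := lt_of_lt_of_le hy hmt
    rw [Code.rel_ofRel, Causet.prefixCode_rel_iff hx hy, heid x hx, heid y hy]
    exact ⟨fun h => h.2.2, fun h => ⟨hxt, hyt, h⟩⟩
  · refine Code.rel_ofRel.2 ⟨lt_of_lt_of_le hx hmt, hyt, ?_⟩
    rw [heid x hx]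
    refine hm x (e y) hx (not_lt.1 fun hey => ?_)
    have := hmono.injOn (lt_of_lt_of_le hey hmt) hyt (heid _ hey)
    omega

lemma isCut_and_iso_of_mem_phiSet {D : Causet} (hD : D ∈ Pinf) {s : Code} (hs : D ∈ phiSet s) :
    D.IsCut s.size ∧ s.Iso (D.prefixCode s.size) := by
  -- test against the doubly principal stem `[0, p + 1]` for a post `p ≥ s.size`
  obtain ⟨p, hp, hpost⟩ := exists_isPost_ge hD s.size
  obtain ⟨u, -, hut, hus, hdom⟩ := mem_phiSet.1 hs _ _ hpost.doublyPrincipal_prefixCode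
    (by simp only [Causet.prefixCode, Code.size_ofRel]; omega) (D.mem_stemSet_prefixCode _)
  have hu : u.size = p + 2 := hut.size_eq
  obtain ⟨g, hg⟩ := hut
  rw [hu] at hg hdom
  have hg' : IsoOn u.rel D.rel g (Iio (p + 2)) (Iio (p + 2)) := (D.isoOn_prefixCode _).comp hg
  have hsp : s.size ≤ p + 2 := by omega
  refine ⟨fun x y hx hy => ?_, g, ?_⟩
  · rcases lt_or_ge y (p + 2) with hyp | hyp
    · exact Causet.rel_of_isoOn_dominating hg' hsp hdom hx hy hyp
    · exact hpost.isCut_succ x y (by omega) (by omega)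
  · refine (hg'.mono (Iio_subset_Iio hsp) (Causet.bijOn_of_isoOn_dominating hg' hsp hdom).1).congr
      (fun x hx y hy => hus x hx y hy) fun x hx y hy => (Causet.prefixCode_rel_iff hx hy).symm

namespace Causet

variable {D : Causet}

/-- The witness relabels the first `s.size` elements of `D` along an isomorphism with `s`. -/
lemma isInitialSummand_prefixCode {s : Code} (hcut : D.IsCut s.size) (hs : s.IsValid)
    (hiso : s.Iso (D.prefixCode s.size)) {n : ℕ} (hn : s.size ≤ n) :
    IsInitialSummand s (D.prefixCode n) := by
  obtain ⟨g, hg⟩ := hiso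
  have hg' : IsoOn s.rel D.rel g (Iio s.size) (Iio s.size) := (D.isoOn_prefixCode _).comp hg
  set e := fun x => if x < s.size then g x else x
  have he : ∀ x < s.size, e x = g x := fun x hx => if_pos hx
  have he' : ∀ x, ¬x < s.size → e x = x := fun x hx => if_neg hx
  have hlt : ∀ x < s.size, g x < s.size := fun x hx => hg'.1.mapsTo hx
  have hebij := bijOn_ite_Iio hg'.1 hn
  refine ⟨Code.ofRel n fun x y => D.rel (e x) (e y), Code.isValid_ofRel (fun x _ y _ h => ?_)
      fun _ _ _ => D.trans _ _ _, ⟨_, ((D.isoOn_prefixCode n).symm.comp (Code.isoOn_ofRel hebij))⟩,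
      fun x hx y hy => ?_, fun x hx y hy hyn => ?_⟩
  · by_cases hx : x < s.size <;> by_cases hy : y < s.size
    · rw [he x hx, he y hy, ← hg'.2 x hx y hy] at h
      exact hs.lt h
    · omega
    · have := D.lt_of_rel _ _ h
      rw [he y hy, he' x hx] at this
      have := hlt y hy
      omega
    · have := D.lt_of_rel _ _ h
      rwa [he' x hx, he' y hy] at this
  · rw [Code.rel_ofRel, he x hx, he y hy, ← hg'.2 x hx y hy]
    exact ⟨fun h => h.2.2, fun h => ⟨lt_of_lt_of_le hx hn, lt_of_lt_of_le hy hn, h⟩⟩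
  · refine Code.rel_ofRel.2 ⟨lt_of_lt_of_le hx hn, hyn, ?_⟩
    rw [he x hx, he' y (not_lt.2 hy)]
    exact hcut _ _ (hlt x hx) hy

lemma shift_iso_blockCode {u : Code} {m n : ℕ} (hu : u.Iso (D.prefixCode n)) (hmn : m ≤ n)
    (hdom : ∀ x < m, ∀ y, m ≤ y → y < u.size → u.rel x y) :
    (u.shift m).Iso (D.blockCode m n) := by
  obtain rfl : u.size = n := hu.size_eq
  obtain ⟨g, hg⟩ := hu
  have hg' : IsoOn u.rel D.rel g (Iio u.size) (Iio u.size) := (D.isoOn_prefixCode _).comp hg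
  have hhigh := hg'.mono Ico_subset_Iio_self (bijOn_of_isoOn_dominating hg' hmn hdom).2
  exact ⟨_, (D.isoOn_blockCode m u.size).symm.comp (hhigh.comp (u.isoOn_shift m))⟩

end Causet

section Blocks

variable {cut : ℕ → ℕ}

lemma Causet.rel_iff_lt_of_mem_blocks {D : Causet} (hcut : StrictMono cut)
    (hD : ∀ k, D.IsCut (cut k)) {x y i j : ℕ} (hx : x ∈ Ico (cut i) (cut (i + 1)))
    (hy : y ∈ Ico (cut j) (cut (j + 1))) (hij : i ≠ j) : D.rel x y ↔ i < j := by
  rcases hij.lt_or_gt with h | h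
  · exact iff_of_true (hD (i + 1) x y hx.2 ((hcut.monotone h).trans hy.1)) h
  · refine iff_of_false (fun hxy => ?_) h.not_gt
    have := lt_of_lt_of_le hy.2 ((hcut.monotone h).trans hx.1)
    exact (D.lt_of_rel _ _ hxy).not_gt this

lemma Causet.exists_isoOn_Ico_of_iso {D D' : Causet} {a b : ℕ}
    (h : (D.blockCode a b).Iso (D'.blockCode a b)) :
    ∃ g, IsoOn D.rel D'.rel g (Ico a b) (Ico a b) :=
  let ⟨_, hg⟩ := h; ⟨_, (D'.isoOn_blockCode a b).comp (hg.comp (D.isoOn_blockCode a b).symm)⟩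

theorem Causet.iso_of_blocks {D D' : Causet} (hcut : StrictMono cut) (h0 : cut 0 = 0)
    (hD : ∀ k, D.IsCut (cut k)) (hD' : ∀ k, D'.IsCut (cut k))
    (hblock : ∀ k, (D.blockCode (cut k) (cut (k + 1))).Iso (D'.blockCode (cut k) (cut (k + 1)))) :
    Iso D D' := by
  choose g hg using fun k => exists_isoOn_Ico_of_iso (hblock k)
  have hmem := mem_Ico_blockIdx hcut h0
  have hidx := fun {x k} => blockIdx_eq (x := x) (k := k) hcut h0
  set f := fun x => g (blockIdx cut x) x
  have hf : ∀ x, f x ∈ Ico (cut (blockIdx cut x)) (cut (blockIdx cut x + 1)) :=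
    fun x => (hg _).1.mapsTo (hmem x)
  have hbij : Function.Bijective f := by
    refine ⟨fun x y hxy => ?_, fun y => ?_⟩
    · have hxy' : blockIdx cut x = blockIdx cut y := by
        rw [← hidx (hf x), ← hidx (hf y), hxy]
      refine (hg (blockIdx cut x)).1.injOn (hmem x) (hxy' ▸ hmem y) ?_
      exact hxy.trans (by simp only [f, hxy'])
    · obtain ⟨x, hx, hgx⟩ := (hg _).1.surjOn (hmem y)
      exact ⟨x, by simp only [f, hidx hx, hgx]⟩
  refine ⟨Equiv.ofBijective f hbij, fun x y => ?_⟩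
  simp only [Equiv.ofBijective_apply]
  by_cases hxy : blockIdx cut x = blockIdx cut y
  · simp only [f, hxy] at hf ⊢
    exact (hg _).2 x (hxy ▸ hmem x) y (hmem y)
  · rw [D.rel_iff_lt_of_mem_blocks hcut hD (hmem x) (hmem y) hxy,
      D'.rel_iff_lt_of_mem_blocks hcut hD' (hf x) (hf y) hxy]

end Blocks

namespace Code

def guard (c : Code) : Code := if c.IsValid ∧ 0 < c.size then c else default

lemma guard_spec (c : Code) : c.guard.IsValid ∧ 0 < c.guard.size := by
  unfold guard
  split_ifs with h
  · exact h
  · exact ⟨⟨fun _ h => absurd h (Finset.notMem_empty _),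
      fun _ _ _ h => absurd h (Finset.notMem_empty _)⟩, Nat.one_pos⟩

lemma guard_eq {c : Code} (hc : c.IsValid) (hpos : 0 < c.size) : c.guard = c := if_pos ⟨hc, hpos⟩

lemma Iso.of_rel_iff {c d : Code} (h : c.size = d.size)
    (hrel : ∀ x < c.size, ∀ y < c.size, (c.rel x y ↔ d.rel x y)) : c.Iso d :=
  ⟨id, h ▸ bijOn_id _, hrel⟩

end Code

section OrdinalSum

variable (c : ℕ → Code)

def sumCut : ℕ → ℕ
  | 0 => 0
  | k + 1 => sumCut k + (c k).guard.size

lemma strictMono_sumCut : StrictMono (sumCut c) :=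
  strictMono_nat_of_lt_succ fun k => Nat.lt_add_of_pos_right (c k).guard_spec.2

/-- Invalid or empty codes are replaced by a point, so that this is a causet for every `c`. -/
def ordinalSum : Causet where
  rel x y := blockIdx (sumCut c) x < blockIdx (sumCut c) y ∨
    (blockIdx (sumCut c) x = blockIdx (sumCut c) y ∧
      (c (blockIdx (sumCut c) x)).guard.rel (x - sumCut c (blockIdx (sumCut c) x))
        (y - sumCut c (blockIdx (sumCut c) x)))
  irrefl x h := by
    rcases h with h | ⟨-, h⟩
    · exact lt_irrefl _ h
    · exact lt_irrefl _ ((c _).guard_spec.1.lt h)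
  trans x y z := by
    rintro (h₁ | ⟨e₁, h₁⟩) (h₂ | ⟨e₂, h₂⟩)
    · exact Or.inl (h₁.trans h₂)
    · exact Or.inl (e₂ ▸ h₁)
    · exact Or.inl (e₁ ▸ h₂)
    · rw [← e₁] at h₂
      exact Or.inr ⟨e₁.trans e₂, (c _).guard_spec.1.2 _ _ _ h₁ h₂⟩
  lt_of_rel x y := by
    have hx := mem_Ico_blockIdx (strictMono_sumCut c) rfl x
    have hy := mem_Ico_blockIdx (strictMono_sumCut c) rfl y
    rintro (h | ⟨e, h⟩)
    · exact lt_of_lt_of_le hx.2 (((strictMono_sumCut c).monotone h).trans hy.1)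
    · have := (c _).guard_spec.1.lt h
      rw [e] at hx this
      have := hy.1
      omega

variable {c}

lemma ordinalSum_rel_of_mem {k x y : ℕ} (hx : x ∈ Ico (sumCut c k) (sumCut c (k + 1)))
    (hy : y ∈ Ico (sumCut c k) (sumCut c (k + 1))) :
    (ordinalSum c).rel x y ↔ (c k).guard.rel (x - sumCut c k) (y - sumCut c k) := by
  have hcut := strictMono_sumCut c
  change _ ∨ _ ↔ _
  rw [blockIdx_eq hcut rfl hx, blockIdx_eq hcut rfl hy]
  simp

lemma isCut_ordinalSum (k : ℕ) : (ordinalSum c).IsCut (sumCut c k) := by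
  intro x y hx hy
  have hcut := strictMono_sumCut c
  have hbx := mem_Ico_blockIdx hcut rfl x
  have hby := mem_Ico_blockIdx hcut rfl y
  refine Or.inl (lt_of_lt_of_le (b := k) ?_ ?_)
  · exact hcut.lt_iff_lt.1 (lt_of_le_of_lt hbx.1 hx)
  · exact Nat.lt_succ_iff.1 (hcut.lt_iff_lt.1 (lt_of_le_of_lt hy hby.2))

lemma blockCode_ordinalSum_iso (k : ℕ) :
    ((ordinalSum c).blockCode (sumCut c k) (sumCut c (k + 1))).Iso (c k).guard := by
  have hsize : sumCut c (k + 1) - sumCut c k = (c k).guard.size := by simp [sumCut]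
  refine Code.Iso.of_rel_iff hsize fun x hx y hy => ?_
  change x < sumCut c (k + 1) - sumCut c k at hx
  change y < sumCut c (k + 1) - sumCut c k at hy
  rw [Causet.blockCode, Code.rel_ofRel,
    ordinalSum_rel_of_mem (k := k) (by simp; omega) (by simp; omega)]
  simp [hx, hy]

lemma ordinalSum_rel_congr {c' : ℕ → Code} {n : ℕ} (h : ∀ k < n, c k = c' k) {x y : ℕ}
    (hx : x < n) (hy : y < n) : (ordinalSum c).rel x y ↔ (ordinalSum c').rel x y := by
  have hsum : ∀ j ≤ n, sumCut c j = sumCut c' j := by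
    intro j hj
    induction j with
    | zero => rfl
    | succ j ih => simp only [sumCut, ih (by omega), h j (by omega)]
  have hmem : ∀ z < n, z ∈ Ico (sumCut c' (blockIdx (sumCut c) z))
      (sumCut c' (blockIdx (sumCut c) z + 1)) := by
    intro z hz
    have hle := blockIdx_le (cut := sumCut c) z
    rw [← hsum _ (by omega), ← hsum _ (by omega)]
    exact mem_Ico_blockIdx (strictMono_sumCut c) rfl z
  have hidx : ∀ z < n, blockIdx (sumCut c') z = blockIdx (sumCut c) z :=
    fun z hz => blockIdx_eq (strictMono_sumCut c') rfl (hmem z hz)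
  have hbx := blockIdx_le (cut := sumCut c) x
  change _ ∨ _ ↔ _ ∨ _
  rw [hidx x hx, hidx y hy, hsum (blockIdx (sumCut c) x) (by omega),
    h (blockIdx (sumCut c) x) (by omega)]

end OrdinalSum

def codeOf : ℕ → Code := (exists_surjective_nat Code).choose

lemma codeOf_surjective : Function.Surjective codeOf := (exists_surjective_nat Code).choose_spec

/-- The part of `t` above its initial summand `s`, read off a chosen witness. -/
def summandAfter (s t : Code) : Code :=
  if h : IsInitialSummand s t then h.choose.shift s.size else default

lemma IsInitialSummand.summandAfter_spec {s t : Code} (h : IsInitialSummand s t) {D : Causet}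
    {n : ℕ} (ht : t.Iso (D.prefixCode n)) (hn : s.size ≤ n) :
    (summandAfter s t).IsValid ∧ (summandAfter s t).Iso (D.blockCode s.size n) := by
  obtain ⟨hu, hut, -, hdom⟩ := h.choose_spec
  rw [summandAfter, dif_pos h]
  exact ⟨Code.isValid_ofRel (fun x _ y _ hxy => Nat.lt_of_add_lt_add_right (hu.lt hxy))
      fun _ _ _ => hu.2 _ _ _, D.shift_iso_blockCode (hut.trans ht) hn hdom⟩

namespace Causet

variable (D : Causet)

def IsPhiSize (m : ℕ) : Prop := ∃ s : Code, s.size = m ∧ s.IsValid ∧ D ∈ phiSet s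

/-- On `Pinf` these are the cuts of `D` in increasing order (`isPhiSize_iff`). -/
def cutSeq : ℕ → ℕ
  | 0 => 0
  | k + 1 => sInf {m | D.IsPhiSize m ∧ cutSeq k < m}

def prefixIdx (k : ℕ) : ℕ :=
  sInf {i | (codeOf i).size = D.cutSeq k ∧ (codeOf i).IsValid ∧ D ∈ phiSet (codeOf i)}

def canonBlock (k : ℕ) : Code :=
  summandAfter (codeOf (D.prefixIdx k)) (codeOf (D.prefixIdx (k + 1)))

/-- Computed from the doubly principal stem-sets containing `D`; isomorphic to `D` on `Pinf`. -/
def canon : Causet := ordinalSum D.canonBlock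

section Pinf

variable {D} (hD : D ∈ Pinf)
include hD

lemma isPhiSize_iff {m : ℕ} : D.IsPhiSize m ↔ D.IsCut m := by
  refine ⟨fun ⟨s, hs, _, hphi⟩ => hs ▸ (isCut_and_iso_of_mem_phiSet hD hphi).1, fun hm => ?_⟩
  exact ⟨_, rfl, D.isValid_prefixCode m, hm.mem_phiSet_prefixCode⟩

lemma cutSeq_succ_spec (k : ℕ) : D.IsCut (D.cutSeq (k + 1)) ∧ D.cutSeq k < D.cutSeq (k + 1) := by
  obtain ⟨p, hp, hpost⟩ := exists_isPost_ge hD (D.cutSeq k)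
  have hne : {m | D.IsPhiSize m ∧ D.cutSeq k < m}.Nonempty :=
    ⟨p + 1, (isPhiSize_iff hD).2 hpost.isCut_succ, Nat.lt_succ_of_le hp⟩
  obtain ⟨hphi, hlt⟩ := Nat.sInf_mem hne
  exact ⟨(isPhiSize_iff hD (m := D.cutSeq (k + 1))).1 hphi, hlt⟩

lemma isCut_cutSeq : ∀ k, D.IsCut (D.cutSeq k)
  | 0 => D.isCut_zero
  | k + 1 => (cutSeq_succ_spec hD k).1

lemma strictMono_cutSeq : StrictMono D.cutSeq :=
  strictMono_nat_of_lt_succ fun k => (cutSeq_succ_spec hD k).2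

lemma prefixIdx_spec (k : ℕ) : (codeOf (D.prefixIdx k)).IsValid ∧
    (codeOf (D.prefixIdx k)).size = D.cutSeq k ∧
    (codeOf (D.prefixIdx k)).Iso (D.prefixCode (D.cutSeq k)) := by
  obtain ⟨i, hi⟩ := codeOf_surjective (D.prefixCode (D.cutSeq k))
  obtain ⟨hsize, hvalid, hphi⟩ := Nat.sInf_mem (s := {i | (codeOf i).size = D.cutSeq k ∧
      (codeOf i).IsValid ∧ D ∈ phiSet (codeOf i)})
    ⟨i, by
      simp only [mem_ofPred_eq, hi]
      exact ⟨rfl, D.isValid_prefixCode _, (isCut_cutSeq hD k).mem_phiSet_prefixCode⟩⟩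
  exact ⟨hvalid, hsize, hsize ▸ (isCut_and_iso_of_mem_phiSet hD hphi).2⟩

lemma canonBlock_spec (k : ℕ) : (D.canonBlock k).IsValid ∧
    (D.canonBlock k).Iso (D.blockCode (D.cutSeq k) (D.cutSeq (k + 1))) := by
  obtain ⟨hvalid, hsize, hiso⟩ := prefixIdx_spec hD k
  obtain ⟨-, -, hiso'⟩ := prefixIdx_spec hD (k + 1)
  have hle := (strictMono_cutSeq hD (Nat.lt_succ_self k)).le
  have hsum := (isInitialSummand_prefixCode (hsize ▸ isCut_cutSeq hD k) hvalid (hsize ▸ hiso)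
    (hsize ▸ hle)).of_iso hiso'.symm
  have := hsum.summandAfter_spec hiso' (hsize ▸ hle)
  rwa [hsize] at this

lemma guard_canonBlock (k : ℕ) : (D.canonBlock k).guard = D.canonBlock k := by
  obtain ⟨hvalid, hiso⟩ := canonBlock_spec hD k
  refine Code.guard_eq hvalid ?_
  rw [hiso.size_eq]
  exact Nat.sub_pos_of_lt (strictMono_cutSeq hD (Nat.lt_succ_self k))

lemma sumCut_canonBlock : sumCut D.canonBlock = D.cutSeq := by
  funext k
  induction k with
  | zero => rfl
  | succ k ih =>
    rw [sumCut, ih, guard_canonBlock hD, (canonBlock_spec hD k).2.size_eq]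
    exact Nat.add_sub_of_le (strictMono_cutSeq hD (Nat.lt_succ_self k)).le

theorem iso_canon : Iso D D.canon := by
  have hsum := sumCut_canonBlock hD
  refine iso_of_blocks (strictMono_cutSeq hD) rfl (isCut_cutSeq hD) (fun k => ?_) fun k => ?_
  · exact hsum ▸ isCut_ordinalSum k
  · have := blockCode_ordinalSum_iso (c := D.canonBlock) k
    rw [hsum, guard_canonBlock hD] at this
    exact (canonBlock_spec hD k).2.symm.trans this.symm

end Pinf

local notation "𝔇" => doublyPrincipalStemAlgebra

lemma measurableSet_isPhiSize (m : ℕ) : MeasurableSet[𝔇] {D : Causet | D.IsPhiSize m} := by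
  simp only [IsPhiSize, ofPred_exists]
  exact .iUnion fun s => (MeasurableSet.const _).inter ((MeasurableSet.const _).inter
    (measurableSet_phiSet s))

lemma measurable_cutSeq : ∀ k, Measurable[𝔇] fun D : Causet => D.cutSeq k
  | 0 => measurable_const
  | k + 1 => measurable_sInf_setOf fun m =>
      (measurableSet_isPhiSize m).inter
        (measurable_cutSeq k (MeasurableSet.of_discrete (s := Iio m)))

lemma measurable_prefixIdx (k : ℕ) : Measurable[𝔇] fun D : Causet => D.prefixIdx k :=
  measurable_sInf_setOf fun i =>
    (measurable_cutSeq k (MeasurableSet.of_discrete (s := {m | (codeOf i).size = m}))).inter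
      ((MeasurableSet.const _).inter (measurableSet_phiSet _))

lemma measurableSet_canon_preimage_cyl {n : ℕ} (C : FinCauset n) :
    MeasurableSet[𝔇] (canon ⁻¹' cyl C) := by
  let idx : Causet → Fin (n + 1) → ℕ := fun D j => D.prefixIdx j
  let ext : (Fin (n + 1) → ℕ) → ℕ → ℕ := fun v k => if h : k < n + 1 then v ⟨k, h⟩ else 0
  let blocks : (Fin (n + 1) → ℕ) → ℕ → Code := fun v k =>
    summandAfter (codeOf (ext v k)) (codeOf (ext v (k + 1)))
  have hidx : Measurable[𝔇] idx :=
    @measurable_pi_lambda _ _ _ 𝔇 _ _ fun j => measurable_prefixIdx j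
  have hpre : canon ⁻¹' cyl C = idx ⁻¹' {v | ordinalSum (blocks v) ∈ cyl C} := by
    ext D
    have hblocks : ∀ k < n, D.canonBlock k = blocks (idx D) k := fun k hk => by
      simp only [blocks, ext, idx, dif_pos (Nat.lt_succ_of_lt hk), dif_pos (Nat.succ_lt_succ hk)]
      rfl
    exact forall₄_congr fun x y hx hy => by rw [canon, ordinalSum_rel_congr hblocks hx hy]
  rw [hpre]
  exact hidx (to_countable _).measurableSet

lemma measurableSet_canon_preimage {E : Set Causet} (hE : MeasurableSet[cylAlgebra] E) :
    MeasurableSet[𝔇] (canon ⁻¹' E) :=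
  @measurable_generateFrom _ _ 𝔇 {E | ∃ n, 0 < n ∧ ∃ C : FinCauset n, E = cyl C} _
    (fun _ ⟨_, _, C, hC⟩ => hC ▸ measurableSet_canon_preimage_cyl C) _ hE

end Causet

lemma Iso.symm {C D : Causet} (h : Iso C D) : Iso D C :=
  let ⟨f, hf⟩ := h; ⟨f.symm, fun x y => by simpa using (hf (f.symm x) (f.symm y)).symm⟩

/-- For every covariant event E ∈ R there is E' in the
σ-algebra generated by the doubly principal stem-sets with E △ E' ⊆ P_∞ᶜ. -/
theorem stmt_17 (E : Set Causet) (hE : MemR E) :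
    ∃ E' : Set Causet, MeasurableSet[doublyPrincipalStemAlgebra] E' ∧
      symmDiff E E' ⊆ Pinfᶜ := by
  refine ⟨Causet.canon ⁻¹' E, Causet.measurableSet_canon_preimage hE.1, fun D hD hPinf => ?_⟩
  have hiso := Causet.iso_canon hPinf
  have hmem : D ∈ E ↔ D.canon ∈ E := ⟨hE.2 _ _ hiso, hE.2 _ _ hiso.symm⟩
  exact (mem_symmDiff.1 hD).elim (fun h => h.2 (hmem.1 h.1)) fun h => h.2 (hmem.2 h.1)
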